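/- arXiv:0906.1415 — 2 statements merged into one kernel-verified Lean document; each statement's English description precedes it below -/
import Mathlib

section
/- Let (X, μ) be a probability space, f : X → X measure-preserving, and suppose X is partitioned into disjoint measurable sets X_1, …, X_q with μ(X_j) = 1/q and f(X_j) ⊆ X_{j+1} (indices mod q). Let v ∈ L²(μ) be real-valued, let μ_j denote the probability measure q·μ restricted to X_j, and set A_j = ∫_{X_j} v dμ_j. For s ∈ ℤ and k ≥ 1 (so that kq + s ≥ 0) define ρ_{s,j}(kq) = ∫_{X_j} (v∘f^{kq+s})·v dμ_j − A_{(j+s) mod q}·A_j. Let v_{q,c} = ∑_{ℓ=0}^{q−1} e^{iℓc} (v∘f^ℓ) and ρ_{q,c}(k) = (1/q) ∑_{j=1}^{q} ( ∫_{X_j} (v_{q,c}∘f^{kq})·\overline{v_{q,c}} dμ_j − |∫_{X_j} v_{q,c} dμ_j|² ). Then for every c ∈ ℝ and every k ≥ 1, ρ_{q,c}(k) = (1/q) ∑_{j=1}^{q} ∑_{s=−(q−1)}^{q−1} (q − |s|) e^{isc} ρ_{s,j}(kq). -/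
/-!
Write `v_{q,c} ∘ f^{kq} · conj v_{q,c}` and `|∫ v_{q,c} dμ_j|²` as double sums over `ℓ, m < q`.
Since `f` preserves `μ` and permutes the pieces cyclically, `f^m` pushes `μ_j` to `μ_{j+m}`, so the
`(ℓ, m)` terms combine into `e^{i(ℓ-m)c} ρ_{ℓ-m, j+m}(kq)`. Summing over `j` absorbs the shift
`j + m`, and exactly `q - |s|` pairs `(ℓ, m)` have `ℓ - m = s`.
-/

open MeasureTheory ENNReal Finset Complex ComplexConjugate Function

theorem Set.preimage_eq_of_mapsTo_of_iUnion_eq_univ {ι α β : Type*} {P : ι → Set α}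
    {Q : ι → Set β} {f : α → β} (hP : ⋃ i, P i = Set.univ) (hQ : Pairwise (Disjoint on Q))
    (hf : ∀ i, Set.MapsTo f (P i) (Q i)) (j : ι) : f ⁻¹' Q j = P j := by
  refine Set.Subset.antisymm (fun x hx => ?_) (hf j)
  obtain ⟨i, hi⟩ := Set.mem_iUnion.mp (hP ▸ Set.mem_univ x : x ∈ ⋃ i, P i)
  obtain rfl | hij := eq_or_ne i j
  · exact hi
  · exact (Set.disjoint_left.mp (hQ hij) (hf i hi) hx).elim

namespace MeasureTheory.MeasurePreserving

variable {X Y : Type*} [MeasurableSpace X] [MeasurableSpace Y] {μ : Measure X} {ν : Measure Y}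
  {f : X → Y}

theorem integral_comp_of_aestronglyMeasurable {E : Type*} [NormedAddCommGroup E]
    [NormedSpace ℝ E] (hf : MeasurePreserving f μ ν) {g : Y → E}
    (hg : AEStronglyMeasurable g ν) : ∫ x, g (f x) ∂μ = ∫ y, g y ∂ν := by
  rw [← hf.map_eq] at hg ⊢
  exact (integral_map hf.aemeasurable hg).symm

theorem restrict_of_mapsTo {ι : Type*} {P : ι → Set X} {Q : ι → Set Y}
    (hf : MeasurePreserving f μ ν) (hQ : ∀ i, MeasurableSet (Q i)) (hP : ⋃ i, P i = Set.univ)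
    (hQdisj : Pairwise (Disjoint on Q)) (hPQ : ∀ i, Set.MapsTo f (P i) (Q i)) (j : ι) :
    MeasurePreserving f (μ.restrict (P j)) (ν.restrict (Q j)) := by
  simpa only [Set.preimage_eq_of_mapsTo_of_iUnion_eq_univ hP hQdisj hPQ j] using
    hf.restrict_preimage (hQ j)

theorem iterate_of_forall_add_one {ι : Type*} [AddMonoidWithOne ι] {ν : ι → Measure X}
    {f : X → X} (hf : ∀ j, MeasurePreserving f (ν j) (ν (j + 1))) (m : ℕ) (j : ι) :
    MeasurePreserving f^[m] (ν j) (ν (j + m)) := by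
  induction m with
  | zero => simpa using MeasurePreserving.id (ν j)
  | succ n ih =>
    rw [Function.iterate_succ', Nat.cast_succ, ← add_assoc]
    exact (hf _).comp ih

end MeasureTheory.MeasurePreserving

theorem Finset.card_filter_range_product_sub_eq (q : ℕ) (s : ℤ) :
    #{p ∈ range q ×ˢ range q | (p.1 : ℤ) - p.2 = s} = q - s.natAbs := by
  rw [← card_range (q - s.natAbs)]
  refine card_nbij' (fun p => min p.1 p.2) (fun m => (m + s.toNat, m + (-s).toNat))
    ?_ ?_ ?_ ?_
  · intro p hp
    simp only [coe_filter, mem_product, mem_range, Set.mem_ofPred_eq, coe_range, Set.mem_Iio,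
      inf_lt_iff] at hp ⊢
    omega
  · intro m hm
    simp only [coe_range, Set.mem_Iio, coe_filter, mem_product, mem_range, Set.mem_ofPred_eq]
      at hm ⊢
    omega
  · intro p hp
    simp only [coe_filter, mem_product, mem_range, Set.mem_ofPred_eq] at hp
    ext <;> simp only <;> omega
  · intro m _
    simp only
    omega

theorem Finset.sum_range_product_sub {R : Type*} [Ring R] (q : ℕ) (G : ℤ → R) :
    ∑ p ∈ range q ×ˢ range q, G (p.1 - p.2)
      = ∑ s ∈ Icc (-(q : ℤ) + 1) (q - 1), ((q : R) - ((|s| : ℤ) : R)) * G s := by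
  have hmaps : ∀ p ∈ range q ×ˢ range q, (p.1 : ℤ) - p.2 ∈ Icc (-(q : ℤ) + 1) (q - 1) := by
    intro p hp
    simp only [mem_product, mem_range, mem_Icc] at hp ⊢
    omega
  rw [← sum_fiberwise_of_maps_to hmaps]
  refine sum_congr rfl fun s hs => ?_
  have hsq : s.natAbs ≤ q := by simp only [mem_Icc] at hs; omega
  rw [sum_congr rfl fun p hp => congrArg G (mem_filter.mp hp).2, sum_const,
    card_filter_range_product_sub_eq, nsmul_eq_mul, Nat.cast_sub hsq, Int.abs_eq_natAbs,
    Int.cast_natCast]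

open Fin.NatCast in
theorem Fin.sum_sum_range_product_sub_add {R : Type*} [Ring R] {q : ℕ} [NeZero q]
    (F : ℤ → Fin q → R) :
    ∑ j : Fin q, ∑ p ∈ range q ×ˢ range q, F (p.1 - p.2) (j + p.2)
      = ∑ j : Fin q, ∑ s ∈ Icc (-(q : ℤ) + 1) (q - 1), ((q : R) - ((|s| : ℤ) : R)) * F s j := by
  have hshift : ∀ p : ℕ × ℕ, ∑ j : Fin q, F (p.1 - p.2) (j + p.2) = ∑ j, F (p.1 - p.2) j :=
    fun p => Fintype.sum_equiv (Equiv.addRight (p.2 : Fin q)) _ _ fun _ => rfl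
  rw [sum_comm, sum_congr rfl fun p _ => hshift p,
    sum_range_product_sub q fun s => ∑ j, F s j]
  simp only [mul_sum]
  exact sum_comm

theorem integral_finset_sum_mul_ofReal {X ι : Type*} [MeasurableSpace X] {μ : Measure X}
    (s : Finset ι) (a : ι → ℂ) {g : ι → X → ℝ} (hg : ∀ i ∈ s, Integrable (g i) μ) :
    ∫ x, ∑ i ∈ s, a i * (g i x : ℂ) ∂μ = ∑ i ∈ s, a i * ((∫ x, g i x ∂μ : ℝ) : ℂ) := by
  rw [integral_finsetSum s fun i hi => ?_]
  · simp only [integral_const_mul, integral_complex_ofReal]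
  · exact (hg i hi).ofReal.const_mul (a i)

theorem Complex.exp_mul_conj_exp_natCast (l m : ℕ) (c : ℝ) :
    exp (I * l * c) * conj (exp (I * m * c)) = exp (I * (((l : ℤ) - m : ℤ) : ℂ) * c) := by
  rw [← exp_conj, ← exp_add]
  congr 1
  simp only [map_mul, conj_I, map_natCast, conj_ofReal]
  push_cast
  ring

/-- The paper's `v_{q,c}`. -/
noncomputable def twistedSum {X : Type*} (q : ℕ) (f : X → X) (v : X → ℝ) (c : ℝ) (x : X) : ℂ :=
  ∑ l ∈ range q, exp (I * l * c) * v (f^[l] x)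

theorem twistedSum_iterate_mul_conj {X : Type*} (q : ℕ) (f : X → X) (v : X → ℝ) (c : ℝ)
    (n : ℕ) (x : X) :
    twistedSum q f v c (f^[n] x) * conj (twistedSum q f v c x)
      = ∑ p ∈ range q ×ˢ range q, exp (I * (((p.1 : ℤ) - p.2 : ℤ) : ℂ) * c)
          * ((v (f^[p.1 + n] x) * v (f^[p.2] x) : ℝ) : ℂ) := by
  simp only [twistedSum, map_sum, sum_mul_sum, ← sum_product', map_mul, conj_ofReal,
    ← Function.iterate_add_apply]
  refine sum_congr rfl fun p _ => ?_
  rw [← exp_mul_conj_exp_natCast]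
  push_cast
  ring

section CyclicPieces

open Fin.NatCast Fin.CommRing

variable {X : Type*} [MeasurableSpace X] {q : ℕ} [NeZero q]

/-- The paper's `ρ_{s,j}(n)`; the exponent `n + s` is truncated at `0`, which never happens for
`n = kq`, `k ≥ 1`, `|s| < q`. -/
noncomputable def cycleCorrelation (ν : Fin q → Measure X) (f : X → X) (v : X → ℝ) (s : ℤ)
    (j : Fin q) (n : ℕ) : ℝ :=
  (∫ x, v (f^[((n : ℤ) + s).toNat] x) * v x ∂(ν j))
    - (∫ x, v x ∂(ν (j + (Fin.intCast s : Fin q)))) * ∫ x, v x ∂(ν j)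

variable {ν : Fin q → Measure X} {f : X → X} {v : X → ℝ}

theorem integral_comp_iterate (hf : ∀ m j, MeasurePreserving f^[m] (ν j) (ν (j + m)))
    (hv : ∀ j, AEStronglyMeasurable v (ν j)) (m : ℕ) (j : Fin q) :
    ∫ x, v (f^[m] x) ∂(ν j) = ∫ x, v x ∂(ν (j + m)) :=
  (hf m j).integral_comp_of_aestronglyMeasurable (hv _)

theorem integral_iterate_mul_iterate (hf : ∀ m j, MeasurePreserving f^[m] (ν j) (ν (j + m)))
    (hv : ∀ j, AEStronglyMeasurable v (ν j)) {a m : ℕ} (hma : m ≤ a) (j : Fin q) :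
    ∫ x, v (f^[a] x) * v (f^[m] x) ∂(ν j) = ∫ y, v (f^[a - m] y) * v y ∂(ν (j + m)) := by
  have hsplit : ∀ x, f^[a] x = f^[a - m] (f^[m] x) := fun x => by
    rw [← Function.iterate_add_apply, Nat.sub_add_cancel hma]
  simp only [hsplit]
  exact (hf m j).integral_comp_of_aestronglyMeasurable
    (((hv _).comp_measurePreserving (hf _ _)).mul (hv _))

theorem integral_iterate_mul_iterate_eq_cycleCorrelation_add
    (hf : ∀ m j, MeasurePreserving f^[m] (ν j) (ν (j + m)))
    (hv : ∀ j, AEStronglyMeasurable v (ν j)) {l m n : ℕ} (hm : m ≤ l + n) (j : Fin q) :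
    ∫ x, v (f^[l + n] x) * v (f^[m] x) ∂(ν j)
      = cycleCorrelation ν f v ((l : ℤ) - m) (j + m) n
        + (∫ x, v x ∂(ν (j + l))) * ∫ x, v x ∂(ν (j + m)) := by
  have hexp : ((n : ℤ) + ((l : ℤ) - m)).toNat = l + n - m := by omega
  have hidx : j + (m : Fin q) + (Fin.intCast ((l : ℤ) - m) : Fin q) = j + l := by
    change j + (m : Fin q) + (((l : ℤ) - m : ℤ) : Fin q) = j + l
    push_cast
    ring
  rw [integral_iterate_mul_iterate hf hv hm, cycleCorrelation, hexp, hidx]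
  ring

theorem integral_twistedSum (hf : ∀ m j, MeasurePreserving f^[m] (ν j) (ν (j + m)))
    (hv : ∀ j, MemLp v 2 (ν j)) [∀ j, IsFiniteMeasure (ν j)] (c : ℝ) (j : Fin q) :
    ∫ x, twistedSum q f v c x ∂(ν j)
      = ∑ l ∈ range q, exp (I * l * c) * ((∫ x, v x ∂(ν (j + l)) : ℝ) : ℂ) := by
  simp only [twistedSum]
  rw [integral_finset_sum_mul_ofReal (g := fun l x => v (f^[l] x)) _ _ fun l _ =>
    ((hv _).comp_measurePreserving (hf l j)).integrable one_le_two]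
  simp only [integral_comp_iterate hf fun j => (hv j).aestronglyMeasurable]

theorem integral_twistedSum_iterate_mul_conj_sub_sq_norm
    (hf : ∀ m j, MeasurePreserving f^[m] (ν j) (ν (j + m))) (hv : ∀ j, MemLp v 2 (ν j))
    [∀ j, IsFiniteMeasure (ν j)] (c : ℝ) {n : ℕ} (hn : q ≤ n + 1) (j : Fin q) :
    (∫ x, twistedSum q f v c (f^[n] x) * conj (twistedSum q f v c x) ∂(ν j))
        - ((‖∫ x, twistedSum q f v c x ∂(ν j)‖ : ℝ) : ℂ) ^ 2
      = ∑ p ∈ range q ×ˢ range q, exp (I * (((p.1 : ℤ) - p.2 : ℤ) : ℂ) * c)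
          * (cycleCorrelation ν f v (p.1 - p.2) (j + p.2) n : ℂ) := by
  have hprod : ∀ a b, Integrable (fun x => v (f^[a] x) * v (f^[b] x)) (ν j) := fun a b =>
    ((hv _).comp_measurePreserving (hf a j)).integrable_mul
      ((hv _).comp_measurePreserving (hf b j))
  simp only [twistedSum_iterate_mul_conj]
  rw [integral_finset_sum_mul_ofReal
      (g := fun (p : ℕ × ℕ) x => v (f^[p.1 + n] x) * v (f^[p.2] x)) _ _ fun p _ => hprod _ _,
    ← mul_conj', integral_twistedSum hf hv, map_sum, sum_mul_sum, ← sum_product',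
    ← sum_sub_distrib]
  refine sum_congr rfl fun p hp => ?_
  rw [mem_product, mem_range, mem_range] at hp
  rw [integral_iterate_mul_iterate_eq_cycleCorrelation_add hf
      (fun j => (hv j).aestronglyMeasurable) (by omega), map_mul,
    conj_ofReal, ← exp_mul_conj_exp_natCast]
  push_cast
  ring

end CyclicPieces

theorem stmt7_general {X : Type*} [MeasurableSpace X] (μ : Measure X) [IsProbabilityMeasure μ]
    (f : X → X) (hf : MeasurePreserving f μ μ)
    (q : ℕ) [NeZero q]
    (P : Fin q → Set X) (hPmeas : ∀ j, MeasurableSet (P j))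
    (hPdisj : ∀ i j, i ≠ j → Disjoint (P i) (P j))
    (hPcover : (⋃ j, P j) = Set.univ)
    (hPmap : ∀ j, Set.MapsTo f (P j) (P (j + 1)))
    (v : X → ℝ) (hv : MemLp v 2 μ)
    (μj : Fin q → Measure X) (hμj : ∀ j, μj j = (q : ℝ≥0∞) • μ.restrict (P j))
    (A : Fin q → ℝ) (hA : ∀ j, A j = ∫ x, v x ∂(μj j))
    (ρ : ℤ → Fin q → ℕ → ℝ)
    (hρ : ∀ (s : ℤ) (j : Fin q) (k : ℕ), 1 ≤ k →
      ρ s j k = (∫ x, v (f^[((k * q : ℕ) + s).toNat] x) * v x ∂(μj j)) - A (j + (Fin.intCast s : Fin q)) * A j)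
    (vq : ℝ → X → ℂ)
    (hvq : ∀ c x, vq c x = ∑ l ∈ Finset.range q, Complex.exp (Complex.I * l * c) * v (f^[l] x))
    (ρq : ℝ → ℕ → ℂ)
    (hρq : ∀ c k, ρq c k = (1 / (q : ℂ)) * ∑ j : Fin q,
      ((∫ x, vq c (f^[k * q] x) * (starRingEnd ℂ) (vq c x) ∂(μj j)) -
        ((‖∫ x, vq c x ∂(μj j)‖ : ℝ) : ℂ) ^ 2)) :
    ∀ (c : ℝ) (k : ℕ), 1 ≤ k →
      ρq c k = (1 / (q : ℂ)) * ∑ j : Fin q,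
        ∑ s ∈ Finset.Icc (-(q : ℤ) + 1) ((q : ℤ) - 1),
          ((q : ℂ) - ((|s| : ℤ) : ℂ)) * Complex.exp (Complex.I * s * c) * (ρ s j k : ℂ) := by
  intro c k hk
  open Fin.NatCast in
  have hshift : ∀ m j, MeasurePreserving f^[m] (μj j) (μj (j + m)) := by
    have hQdisj : Pairwise (Disjoint on fun j => P (j + 1)) :=
      Pairwise.comp_of_injective (fun i j h => hPdisj i j h) (add_left_injective 1)
    refine MeasurePreserving.iterate_of_forall_add_one fun j => ?_
    rw [hμj, hμj]
    exact (hf.restrict_of_mapsTo (fun j => hPmeas (j + 1)) hPcover hQdisj hPmap j).smul_measure _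
  have hvj : ∀ j, MemLp v 2 (μj j) := fun j =>
    hμj j ▸ (hv.restrict (P j)).smul_measure (natCast_ne_top q)
  have : ∀ j, IsFiniteMeasure (μj j) := fun j =>
    hμj j ▸ Measure.smul_finite _ (natCast_ne_top q)
  have hvq' : vq c = twistedSum q f v c := funext (hvq c)
  have hρ' : ∀ s j, ρ s j k = cycleCorrelation μj f v s j (k * q) := fun s j => by
    rw [hρ s j k hk, hA, hA]
    rfl
  simp only [hρq, hvq', hρ',
    integral_twistedSum_iterate_mul_conj_sub_sq_norm hshift hvj c (n := k * q) (by nlinarith)]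
  rw [Fin.sum_sum_range_product_sub_add fun s j =>
    exp (I * s * c) * (cycleCorrelation μj f v s j (k * q) : ℂ)]
  simp only [mul_assoc]

/-- key identity relating the twisted autocorrelations `ρ_{q,c}` of
`v_{q,c} = ∑_{ℓ<q} e^{iℓc} v∘f^ℓ` to the autocorrelations of `v` up to a `q`-cycle:
for every `c` and `k ≥ 1`,
`ρ_{q,c}(k) = (1/q) ∑_{j=1}^q ∑_{s=-(q-1)}^{q-1} (q-|s|) e^{isc} ρ_{s,j}(kq)`. -/
theorem stmt7 {X : Type*} [MeasurableSpace X] (μ : Measure X) [IsProbabilityMeasure μ]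
    (f : X → X) (hf : MeasurePreserving f μ μ)
    (q : ℕ) [NeZero q]
    (P : Fin q → Set X) (hPmeas : ∀ j, MeasurableSet (P j))
    (hPdisj : ∀ i j, i ≠ j → Disjoint (P i) (P j))
    (hPcover : (⋃ j, P j) = Set.univ)
    (hPμ : ∀ j, μ (P j) = 1 / q)
    (hPmap : ∀ j, Set.MapsTo f (P j) (P (j + 1)))
    (v : X → ℝ) (hv : MemLp v 2 μ)
    (μj : Fin q → Measure X) (hμj : ∀ j, μj j = (q : ℝ≥0∞) • μ.restrict (P j))
    (A : Fin q → ℝ) (hA : ∀ j, A j = ∫ x, v x ∂(μj j))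
    (ρ : ℤ → Fin q → ℕ → ℝ)
    (hρ : ∀ (s : ℤ) (j : Fin q) (k : ℕ), 1 ≤ k →
      ρ s j k = (∫ x, v (f^[((k * q : ℕ) + s).toNat] x) * v x ∂(μj j)) - A (j + (Fin.intCast s : Fin q)) * A j)
    (vq : ℝ → X → ℂ)
    (hvq : ∀ c x, vq c x = ∑ l ∈ Finset.range q, Complex.exp (Complex.I * l * c) * v (f^[l] x))
    (ρq : ℝ → ℕ → ℂ)
    (hρq : ∀ c k, ρq c k = (1 / (q : ℂ)) * ∑ j : Fin q,
      ((∫ x, vq c (f^[k * q] x) * (starRingEnd ℂ) (vq c x) ∂(μj j)) -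
        ((‖∫ x, vq c x ∂(μj j)‖ : ℝ) : ℂ) ^ 2)) :
    ∀ (c : ℝ) (k : ℕ), 1 ≤ k →
      ρq c k = (1 / (q : ℂ)) * ∑ j : Fin q,
        ∑ s ∈ Finset.Icc (-(q : ℤ) + 1) ((q : ℤ) - 1),
          ((q : ℂ) - ((|s| : ℤ) : ℂ)) * Complex.exp (Complex.I * s * c) * (ρ s j k : ℂ) :=
  stmt7_general μ f hf q P hPmeas hPdisj hPcover hPmap v hv μj hμj A hA ρ hρ vq hvq ρq hρq
end

section
/- Let ρ : ℕ → ℝ and suppose |ρ(k)| ≤ C k^{−d} for all k ≥ 1, where C > 0 and d > 2. Then for every c ∈ ℝ and n ≥ 1, |D_c(n) − S(c)·n − S_0(c)| ≤ 2C (1/((d−1)(d−2)) + 1/n) · n^{−(d−2)}, where D_c(n) = ∑_{k=−n}^{n} (n − |k|) e^{ikc} ρ(|k|), S(c) = ∑_{k=−∞}^{∞} e^{ikc} ρ(|k|), and S_0(c) = −∑_{k=−∞}^{∞} e^{ikc} |k| ρ(|k|). -/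
/-!
Since `∑_{k ∈ ℤ} (n - |k|) e^{ikc} ρ(|k|) = S(c) n + S₀(c)`, the difference
`D_c(n) - S(c) n - S₀(c)` is the tail `∑_{|k| > n} (|k| - n) e^{ikc} ρ(|k|)`, of norm at most
`2C ∑_{j ≥ 0} (j + 1) (n + j + 1)^{-d}`. By the mean value theorem each term of this sum is at most
the increment over `[n + j, n + j + 1]` of an antiderivative `G` of `y ↦ (y + 1 - n) y^{-d}` that
vanishes at infinity, so the sum telescopes to at most `-G(n)`.
-/

open Filter Topology

/-- Modified mean-square displacement `D_c(n) = ∑_{k=-n}^n (n-|k|) e^{ikc} ρ(|k|)`. -/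
noncomputable def Dc (ρ : ℕ → ℝ) (c : ℝ) (n : ℕ) : ℂ :=
  ∑ k ∈ Finset.Icc (-(n : ℤ)) (n : ℤ),
    ((n : ℂ) - ((|k| : ℤ) : ℂ)) * Complex.exp (Complex.I * k * c) * (ρ k.natAbs : ℂ)

/-- Power spectrum `S(c) = ∑_{k∈ℤ} e^{ikc} ρ(|k|)`. -/
noncomputable def Sc (ρ : ℕ → ℝ) (c : ℝ) : ℂ :=
  ∑' k : ℤ, Complex.exp (Complex.I * k * c) * (ρ k.natAbs : ℂ)

/-- `S₀(c) = -∑_{k∈ℤ} e^{ikc} |k| ρ(|k|)`. -/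
noncomputable def S0c (ρ : ℕ → ℝ) (c : ℝ) : ℂ :=
  -∑' k : ℤ, Complex.exp (Complex.I * k * c) * ((|k| : ℤ) : ℂ) * (ρ k.natAbs : ℂ)

open Finset

lemma sum_range_le_neg_of_le_sub {f G : ℕ → ℝ} (hf : ∀ j, 0 ≤ f j)
    (hfG : ∀ j, f j ≤ G (j + 1) - G j) (hG : Tendsto G atTop (𝓝 0)) (N : ℕ) :
    ∑ j ∈ range N, f j ≤ -G 0 := by
  have hmono : Monotone G := monotone_nat_of_le_succ fun j => by linarith [hf j, hfG j]
  calc ∑ j ∈ range N, f j ≤ ∑ j ∈ range N, (G (j + 1) - G j) := sum_le_sum fun j _ => hfG j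
    _ = G N - G 0 := sum_range_sub G N
    _ ≤ -G 0 := by linarith [hmono.ge_of_tendsto hG N]

section TailBound

variable {d x : ℝ}

noncomputable def tailPrimitive (d x y : ℝ) : ℝ :=
  y ^ (2 - d) / (2 - d) + (1 - x) * y ^ (1 - d) / (1 - d)

lemma rpow_one_sub_eq_mul {y : ℝ} (hy : 0 < y) (d : ℝ) : y ^ (1 - d) = y * y ^ (-d) := by
  rw [sub_eq_add_neg, Real.rpow_add hy, Real.rpow_one]

lemma hasDerivAt_tailPrimitive (hd1 : d ≠ 1) (hd2 : d ≠ 2) {y : ℝ} (hy : 0 < y) :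
    HasDerivAt (tailPrimitive d x) ((y + 1 - x) * y ^ (-d)) y := by
  have h1 := Real.hasDerivAt_rpow_const (x := y) (p := 2 - d) (Or.inl hy.ne')
  have h2 := Real.hasDerivAt_rpow_const (x := y) (p := 1 - d) (Or.inl hy.ne')
  refine ((h1.div_const _).add ((h2.const_mul (1 - x)).div_const _)).congr_deriv ?_
  have h2d : (2 : ℝ) - d ≠ 0 := sub_ne_zero.mpr (Ne.symm hd2)
  have h1d : (1 : ℝ) - d ≠ 0 := sub_ne_zero.mpr (Ne.symm hd1)
  rw [show 2 - d - 1 = 1 - d by ring, show 1 - d - 1 = -d by ring, rpow_one_sub_eq_mul hy]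
  field_simp
  ring

lemma tendsto_tailPrimitive_atTop (hd : 2 < d) : Tendsto (tailPrimitive d x) atTop (𝓝 0) := by
  have h1 := (tendsto_rpow_neg_atTop (y := d - 2) (by linarith)).div_const (2 - d)
  have h2 := ((tendsto_rpow_neg_atTop (y := d - 1) (by linarith)).const_mul (1 - x)).div_const
    (1 - d)
  unfold tailPrimitive
  simpa using h1.add h2

lemma succ_mul_rpow_le_tailPrimitive_sub (hd : 2 < d) (hx : 0 < x) (j : ℕ) :
    ((j : ℝ) + 1) * (x + j + 1) ^ (-d) ≤
      tailPrimitive d x (x + j + 1) - tailPrimitive d x (x + j) := by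
  have hxj : 0 < x + j := by positivity
  have hderiv : ∀ y ∈ Set.Icc (x + j) (x + j + 1),
      HasDerivAt (tailPrimitive d x) ((y + 1 - x) * y ^ (-d)) y := fun y hy =>
    hasDerivAt_tailPrimitive (by linarith) (by linarith) (hxj.trans_le hy.1)
  obtain ⟨y, hy, hslope⟩ := exists_hasDerivAt_eq_slope (tailPrimitive d x) _
    (lt_add_one (x + j)) (fun y hy => (hderiv y hy).continuousAt.continuousWithinAt)
    (fun y hy => hderiv y (Set.Ioo_subset_Icc_self hy))
  rw [add_sub_cancel_left, div_one] at hslope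
  rw [← hslope]
  exact mul_le_mul (by linarith [hy.1])
    (Real.rpow_le_rpow_of_nonpos (hxj.trans hy.1) hy.2.le (by linarith)) (by positivity)
    (by linarith [hy.1])

lemma neg_tailPrimitive_self_le (hd : 2 < d) (hx : 0 < x) :
    -tailPrimitive d x x ≤ (1 / ((d - 1) * (d - 2)) + 1 / x) * x ^ (-(d - 2)) := by
  have hd1 : 0 < d - 1 := by linarith
  have hd2 : 0 < d - 2 := by linarith
  have hpow : x ^ (-(d - 2)) = x * x ^ (1 - d) := by
    rw [show -(d - 2) = 1 + (1 - d) by ring, Real.rpow_add hx, Real.rpow_one]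
  have hexp : -tailPrimitive d x x =
      x ^ (1 - d) * (x / ((d - 1) * (d - 2)) + 1 / (d - 1)) := by
    rw [tailPrimitive, show (2 : ℝ) - d = -(d - 2) by ring, hpow,
      show (1 : ℝ) - d = -(d - 1) by ring]
    field_simp
    ring
  rw [hexp, hpow, show (1 / ((d - 1) * (d - 2)) + 1 / x) * (x * x ^ (1 - d)) =
    x ^ (1 - d) * (x / ((d - 1) * (d - 2)) + 1) by field_simp]
  gcongr
  rw [div_le_one hd1]
  linarith

lemma sum_range_succ_mul_rpow_le (hd : 2 < d) (hx : 0 < x) (N : ℕ) :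
    ∑ j ∈ range N, ((j : ℝ) + 1) * (x + j + 1) ^ (-d) ≤
      (1 / ((d - 1) * (d - 2)) + 1 / x) * x ^ (-(d - 2)) := by
  refine (sum_range_le_neg_of_le_sub (G := fun j : ℕ => tailPrimitive d x (x + j))
    (fun j => by positivity) (fun j => ?_) ?_ N).trans ?_
  · simpa [add_assoc] using succ_mul_rpow_le_tailPrimitive_sub hd hx j
  · exact (tendsto_tailPrimitive_atTop hd).comp
      (tendsto_atTop_add_const_left atTop x tendsto_natCast_atTop_atTop)
  · simpa using neg_tailPrimitive_self_le hd hx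

lemma summable_succ_mul_rpow (hd : 2 < d) (hx : 0 < x) :
    Summable fun j : ℕ => ((j : ℝ) + 1) * (x + j + 1) ^ (-d) :=
  summable_of_sum_range_le (fun j => by positivity) (sum_range_succ_mul_rpow_le hd hx)

lemma tsum_succ_mul_rpow_le (hd : 2 < d) (hx : 0 < x) :
    ∑' j : ℕ, ((j : ℝ) + 1) * (x + j + 1) ^ (-d) ≤
      (1 / ((d - 1) * (d - 2)) + 1 / x) * x ^ (-(d - 2)) :=
  Real.tsum_le_of_sum_range_le (fun j => by positivity) (sum_range_succ_mul_rpow_le hd hx)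

end TailBound

lemma HasSum.int_natAbs {g : ℕ → ℝ} {a : ℝ} (hg : HasSum g a) :
    HasSum (fun k : ℤ => g k.natAbs) (2 * a - g 0) := by
  have := HasSum.of_nat_of_neg (f := fun k : ℤ => g k.natAbs) (by simpa using hg)
    (by simpa using hg)
  simpa [two_mul] using this

lemma summable_abs_of_summable_natCast_mul_abs {ρ : ℕ → ℝ}
    (hρ : Summable fun m : ℕ => (m : ℝ) * |ρ m|) : Summable fun m => |ρ m| := by
  rw [← summable_nat_add_iff 1]
  refine ((summable_nat_add_iff 1).mpr hρ).of_nonneg_of_le (fun m => abs_nonneg _) fun m => ?_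
  push_cast
  exact le_mul_of_one_le_left (abs_nonneg _) (by linarith [m.cast_nonneg (α := ℝ)])

lemma norm_cexp_I_mul_intCast_mul (k : ℤ) (c : ℝ) : ‖Complex.exp (Complex.I * k * c)‖ = 1 := by
  rw [show Complex.I * k * c = ((k * c : ℝ) : ℂ) * Complex.I by push_cast; ring]
  exact Complex.norm_exp_ofReal_mul_I _

section Spectrum

variable (ρ : ℕ → ℝ) (c : ℝ)

noncomputable def mode (k : ℤ) : ℂ := Complex.exp (Complex.I * k * c) * ρ k.natAbs

lemma norm_mode (k : ℤ) : ‖mode ρ c k‖ = |ρ k.natAbs| := by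
  rw [mode, norm_mul, norm_cexp_I_mul_intCast_mul, Complex.norm_real, Real.norm_eq_abs, one_mul]

variable {ρ}

lemma summable_weight_mul_mode {w : ℤ → ℝ} {A : ℝ} (hw : ∀ k, |w k| ≤ A * (k.natAbs + 1))
    (hρ : Summable fun m : ℕ => (m : ℝ) * |ρ m|) : Summable fun k => (w k : ℂ) * mode ρ c k := by
  have hmaj : Summable fun k : ℤ => A * ((k.natAbs : ℝ) * |ρ k.natAbs| + |ρ k.natAbs|) :=
    (((hρ.add (summable_abs_of_summable_natCast_mul_abs hρ)).hasSum.int_natAbs).summable).mul_left A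
  refine .of_norm_bounded hmaj fun k => ?_
  rw [norm_mul, norm_mode, Complex.norm_real, Real.norm_eq_abs]
  calc |w k| * |ρ k.natAbs| ≤ A * (k.natAbs + 1) * |ρ k.natAbs| :=
        mul_le_mul_of_nonneg_right (hw k) (abs_nonneg _)
    _ = _ := by ring

lemma tsum_sub_natAbs_mul_mode (n : ℕ) (hρ : Summable fun m : ℕ => (m : ℝ) * |ρ m|) :
    ∑' k : ℤ, (((n : ℝ) - k.natAbs : ℝ) : ℂ) * mode ρ c k = Sc ρ c * n + S0c ρ c := by
  have hone : ∀ k : ℤ, |(1 : ℝ)| ≤ 1 * (k.natAbs + 1) := fun k => by simp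
  have habs : ∀ k : ℤ, |(k.natAbs : ℝ)| ≤ 1 * (k.natAbs + 1) := fun k => by simp
  have h1 := (summable_weight_mul_mode c hone hρ).mul_left (n : ℂ)
  simp only [Complex.ofReal_one, one_mul] at h1
  have hterm : ∀ k : ℤ, (((n : ℝ) - k.natAbs : ℝ) : ℂ) * mode ρ c k =
      n * mode ρ c k - ((k.natAbs : ℝ) : ℂ) * mode ρ c k := fun k => by push_cast; ring
  have habs_term : ∀ k : ℤ, ((k.natAbs : ℝ) : ℂ) * mode ρ c k =
      Complex.exp (Complex.I * k * c) * ((|k| : ℤ) : ℂ) * ρ k.natAbs := fun k => by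
    rw [mode, Complex.ofReal_natCast, Nat.cast_natAbs]; ring
  rw [tsum_congr hterm, h1.tsum_sub (summable_weight_mul_mode c habs hρ), tsum_mul_left,
    tsum_congr habs_term, Sc, S0c]
  simp only [mode]
  ring

lemma Dc_eq_tsum (n : ℕ) :
    Dc ρ c n = ∑' k : ℤ, ((max ((n : ℝ) - k.natAbs) 0 : ℝ) : ℂ) * mode ρ c k := by
  rw [tsum_eq_sum (s := Icc (-(n : ℤ)) n) fun k hk => ?_, Dc]
  · refine sum_congr rfl fun k hk => ?_
    have hkn : (k.natAbs : ℝ) ≤ n := by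
      rw [mem_Icc] at hk; exact_mod_cast (by omega : k.natAbs ≤ n)
    rw [max_eq_left (by linarith), mode, Complex.ofReal_sub, Complex.ofReal_natCast,
      Complex.ofReal_natCast, Nat.cast_natAbs]
    ring
  · have hkn : (n : ℝ) < k.natAbs := by
      rw [mem_Icc] at hk; exact_mod_cast (by omega : n < k.natAbs)
    rw [max_eq_right (by linarith), Complex.ofReal_zero, zero_mul]

lemma Dc_sub_eq_tsum (n : ℕ) (hρ : Summable fun m : ℕ => (m : ℝ) * |ρ m|) :
    Dc ρ c n - Sc ρ c * n - S0c ρ c =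
      ∑' k : ℤ, ((max ((k.natAbs : ℝ) - n) 0 : ℝ) : ℂ) * mode ρ c k := by
  have hpos : ∀ k : ℤ, |max ((n : ℝ) - k.natAbs) 0| ≤ n * (k.natAbs + 1) := fun k => by
    rw [abs_of_nonneg (le_max_right _ _), max_le_iff]
    constructor <;> nlinarith [(n.cast_nonneg : (0 : ℝ) ≤ n), (k.natAbs.cast_nonneg : (0 : ℝ) ≤ _)]
  have hlin : ∀ k : ℤ, |(n : ℝ) - k.natAbs| ≤ (n + 1) * (k.natAbs + 1) := fun k => by
    rw [abs_le]
    constructor <;> nlinarith [(n.cast_nonneg : (0 : ℝ) ≤ n), (k.natAbs.cast_nonneg : (0 : ℝ) ≤ _)]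
  rw [sub_sub, ← tsum_sub_natAbs_mul_mode c n hρ, Dc_eq_tsum,
    ← (summable_weight_mul_mode c hpos hρ).tsum_sub (summable_weight_mul_mode c hlin hρ)]
  refine tsum_congr fun k => ?_
  rw [← sub_mul, ← Complex.ofReal_sub, ← max_sub_sub_right, sub_self, zero_sub, neg_sub,
    max_comm]

lemma summable_excess_mul_abs (n : ℕ) (hρ : Summable fun m : ℕ => (m : ℝ) * |ρ m|) :
    Summable fun m : ℕ => max ((m : ℝ) - n) 0 * |ρ m| :=
  hρ.of_nonneg_of_le (fun m => by positivity) fun m => mul_le_mul_of_nonneg_right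
    (max_le (by linarith [(n.cast_nonneg : (0 : ℝ) ≤ n)]) m.cast_nonneg) (abs_nonneg _)

lemma norm_Dc_sub_le (n : ℕ) (hρ : Summable fun m : ℕ => (m : ℝ) * |ρ m|) :
    ‖Dc ρ c n - Sc ρ c * n - S0c ρ c‖ ≤ 2 * ∑' m : ℕ, max ((m : ℝ) - n) 0 * |ρ m| := by
  have hsum := (summable_excess_mul_abs n hρ).hasSum.int_natAbs
  rw [Nat.cast_zero, zero_sub, max_eq_right (by simp), zero_mul, sub_zero] at hsum
  rw [Dc_sub_eq_tsum c n hρ]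
  refine tsum_of_norm_bounded hsum fun k => ?_
  rw [norm_mul, norm_mode, Complex.norm_real, Real.norm_eq_abs, abs_of_nonneg (le_max_right _ _)]

end Spectrum

section Decay

variable {ρ : ℕ → ℝ} {C d : ℝ}

lemma natCast_mul_abs_le_of_decay (hd : 1 < d)
    (hdecay : ∀ k : ℕ, 1 ≤ k → |ρ k| ≤ C * (k : ℝ) ^ (-d)) (m : ℕ) : (m : ℝ) * |ρ m| ≤ C * (m : ℝ) ^ (1 - d) := by
  rcases Nat.eq_zero_or_pos m with rfl | hm
  · rw [Nat.cast_zero, Real.zero_rpow (by linarith)]; simp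
  · have hm' : (0 : ℝ) < m := by exact_mod_cast hm
    calc (m : ℝ) * |ρ m| ≤ m * (C * (m : ℝ) ^ (-d)) :=
          mul_le_mul_of_nonneg_left (hdecay m hm) hm'.le
      _ = C * (m : ℝ) ^ (1 - d) := by rw [rpow_one_sub_eq_mul hm']; ring

lemma summable_natCast_mul_abs_of_decay (hd : 2 < d)
    (hdecay : ∀ k : ℕ, 1 ≤ k → |ρ k| ≤ C * (k : ℝ) ^ (-d)) :
    Summable fun m : ℕ => (m : ℝ) * |ρ m| :=
  ((Real.summable_nat_rpow.mpr (by linarith)).mul_left C).of_nonneg_of_le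
    (fun m => by positivity) (natCast_mul_abs_le_of_decay (by linarith) hdecay)

lemma tsum_excess_mul_abs_le (hd : 2 < d) (hdecay : ∀ k : ℕ, 1 ≤ k → |ρ k| ≤ C * (k : ℝ) ^ (-d))
    {n : ℕ} (hn : (0 : ℝ) < n) :
    ∑' m : ℕ, max ((m : ℝ) - n) 0 * |ρ m| ≤ C * ∑' j : ℕ, ((j : ℝ) + 1) * (n + j + 1) ^ (-d) := by
  have hs := summable_excess_mul_abs n (summable_natCast_mul_abs_of_decay hd hdecay)
  rw [← hs.sum_add_tsum_nat_add (n + 1), sum_eq_zero fun m hm => ?_, zero_add,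
    ← tsum_mul_left]
  · refine ((summable_nat_add_iff (n + 1)).mpr hs).tsum_le_tsum (fun j => ?_)
      ((summable_succ_mul_rpow hd hn).mul_left C)
    have hshift : ((j + (n + 1) : ℕ) : ℝ) - n = j + 1 := by push_cast; ring
    rw [hshift, max_eq_left (by positivity)]
    calc ((j : ℝ) + 1) * |ρ (j + (n + 1))| ≤ (j + 1) * (C * ((j + (n + 1) : ℕ) : ℝ) ^ (-d)) :=
          mul_le_mul_of_nonneg_left (hdecay _ (by omega)) (by positivity)
      _ = C * ((j + 1) * (n + j + 1) ^ (-d)) := by push_cast; ring_nf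
  · have hmn : (m : ℝ) ≤ n := by exact_mod_cast Nat.lt_succ_iff.mp (mem_range.mp hm)
    rw [max_eq_right (by linarith), zero_mul]

end Decay

theorem stmt12_general (ρ : ℕ → ℝ) (C d : ℝ) (hd : 2 < d)
    (hdecay : ∀ k : ℕ, 1 ≤ k → |ρ k| ≤ C * (k : ℝ) ^ (-d)) :
    ∀ (c : ℝ) (n : ℕ), 1 ≤ n →
      ‖Dc ρ c n - Sc ρ c * n - S0c ρ c‖ ≤
        2 * C * (1 / ((d - 1) * (d - 2)) + 1 / n) * (n : ℝ) ^ (-(d - 2)) := by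
  intro c n hn
  have hn0 : (0 : ℝ) < n := by exact_mod_cast hn
  have hC : 0 ≤ C := by simpa using (abs_nonneg _).trans (hdecay 1 le_rfl)
  calc ‖Dc ρ c n - Sc ρ c * n - S0c ρ c‖
      ≤ 2 * ∑' m : ℕ, max ((m : ℝ) - n) 0 * |ρ m| :=
        norm_Dc_sub_le c n (summable_natCast_mul_abs_of_decay hd hdecay)
    _ ≤ 2 * (C * ∑' j : ℕ, ((j : ℝ) + 1) * (n + j + 1) ^ (-d)) := by
        gcongr; exact tsum_excess_mul_abs_le hd hdecay hn0
    _ ≤ 2 * (C * ((1 / ((d - 1) * (d - 2)) + 1 / n) * (n : ℝ) ^ (-(d - 2)))) := by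
        gcongr; exact tsum_succ_mul_rpow_le hd hn0
    _ = 2 * C * (1 / ((d - 1) * (d - 2)) + 1 / n) * (n : ℝ) ^ (-(d - 2)) := by ring

/-- if `|ρ(k)| ≤ C k^{-d}` with `C > 0` and `d > 2`, then for every `c`
and `n ≥ 1`, `|D_c(n) - S(c)n - S₀(c)| ≤ 2C (1/((d-1)(d-2)) + 1/n) n^{-(d-2)}`. -/
theorem stmt12 (ρ : ℕ → ℝ) (C d : ℝ) (hC : 0 < C) (hd : 2 < d)
    (hdecay : ∀ k : ℕ, 1 ≤ k → |ρ k| ≤ C * (k : ℝ) ^ (-d)) :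
    ∀ (c : ℝ) (n : ℕ), 1 ≤ n →
      ‖Dc ρ c n - Sc ρ c * n - S0c ρ c‖ ≤
        2 * C * (1 / ((d - 1) * (d - 2)) + 1 / n) * (n : ℝ) ^ (-(d - 2)) :=
  stmt12_general ρ C d hd hdecay
end
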